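/- For every x ∈ X, the operator norm of (1 − Π^x)·F·Π^x on ℂ^Ȳ is at most 2^{−n/2}·√(2·Γ_x); consequently, for every unit vector ψ ∈ ℂ^Ȳ with Π^x ψ = ψ, one has ‖(1 − Π^x)·F·ψ‖² ≤ 2·Γ_x/2^n. -/

import Mathlib

open scoped Matrix Kronecker

noncomputable section

/-- The ℓ²→ℓ² operator norm of a square complex matrix. -/
def opNorm {I : Type*} [Fintype I] [DecidableEq I] (A : Matrix I I ℂ) : ℝ :=
  ‖Matrix.toEuclideanCLM (𝕜 := ℂ) A‖

/-- The commutator [A,B] = AB - BA. -/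
def commM {I : Type*} [Fintype I] (A B : Matrix I I ℂ) : Matrix I I ℂ := A * B - B * A

/-- Euclidean norm of a vector in ℂ^I. -/
def vnorm {I : Type*} [Fintype I] (v : I → ℂ) : ℝ := Real.sqrt (∑ i, ‖v i‖ ^ 2)

/-- Y = {0,1}^n. -/
abbrev Yb (n : ℕ) := Fin n → Bool
/-- Ȳ = Y ∪ {⊥}. -/
abbrev Ybar (n : ℕ) := Option (Yb n)

/-- standard basis vector |a⟩. -/
def ket {n : ℕ} (a : Ybar n) : Ybar n → ℂ := fun b => if b = a then 1 else 0

/-- (-1)^{η⋅y}. -/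
def signDot {n : ℕ} (η y : Yb n) : ℂ := (-1 : ℂ) ^ (Finset.univ.filter fun i => η i && y i).card

/-- 2^{-n/2}. -/
def cst (n : ℕ) : ℝ := (2 : ℝ) ^ (-(n : ℝ) / 2)

/-- |φ_η⟩ = 2^{-n/2} ∑_y (-1)^{η⋅y} |y⟩. -/
def phi {n : ℕ} (η : Yb n) : Ybar n → ℂ :=
  fun a => Option.casesOn a 0 fun y => (cst n : ℂ) * signDot η y

/-- |φ_0⟩. -/
def phi0 (n : ℕ) : Ybar n → ℂ := phi fun _ => false

/-- The Walsh–Hadamard transform on ℂ^Y, extended by the identity on |⊥⟩. -/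
def Hbar (n : ℕ) : Matrix (Ybar n) (Ybar n) ℂ :=
  Matrix.of fun a b =>
    match a, b with
    | none, none => 1
    | some y, some y' => (cst n : ℂ) * signDot y y'
    | _, _ => 0

/-- The involution exchanging ⊥ and 0^n. -/
def swapBot (n : ℕ) : Ybar n → Ybar n :=
  fun a =>
    Option.casesOn a (some fun _ => false) fun y =>
      if y = (fun _ => false) then none else some y

/-- The permutation matrix exchanging |⊥⟩ and |0^n⟩. -/
def Sswap (n : ℕ) : Matrix (Ybar n) (Ybar n) ℂ :=
  Matrix.of fun a b => if a = swapBot n b then 1 else 0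

/-- F = H̄ ⬝ S ⬝ H̄. -/
def Fmat (n : ℕ) : Matrix (Ybar n) (Ybar n) ℂ := Hbar n * Sswap n * Hbar n

/-- Γ_x = |{y : (x,y) ∈ R}|. -/
def Gam {n : ℕ} {X : Type*} [Fintype X] (R : X → Yb n → Prop) [∀ x, DecidablePred (R x)]
    (x : X) : ℕ :=
  (Finset.univ.filter fun y => R x y).card

/-- Γ_R = max_x Γ_x. -/
def GamR {n : ℕ} {X : Type*} [Fintype X] (R : X → Yb n → Prop) [∀ x, DecidablePred (R x)] : ℕ :=
  Finset.univ.sup fun x => Gam R x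

/-- whether an entry a ∈ Ȳ satisfies the relation at x (⊥ never does). -/
def hitB {n : ℕ} {X : Type*} (R : X → Yb n → Prop) [∀ x, DecidablePred (R x)] (x : X) :
    Ybar n → Bool :=
  fun a => Option.casesOn a false fun y => decide (R x y)

/-- The projection Π^x = ∑_{y : (x,y)∈R} |y⟩⟨y| on ℂ^Ȳ. -/
def Pix {n : ℕ} {X : Type*} (R : X → Yb n → Prop) [∀ x, DecidablePred (R x)] (x : X) :
    Matrix (Ybar n) (Ybar n) ℂ :=
  Matrix.diagonal fun a => if hitB R x a then 1 else 0

/-- bitwise xor. -/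
def xorY {n : ℕ} (y y' : Yb n) : Yb n := fun i => xor (y i) (y' i)

/-- CNOT on Y × Ȳ (control Ȳ, target Y), acting trivially on |y⟩⊗|⊥⟩. -/
def cnotFun (n : ℕ) : Yb n × Ybar n → Yb n × Ybar n :=
  fun p => Option.casesOn p.2 p fun y' => (xorY p.1 y', p.2)

def CNOTmat (n : ℕ) : Matrix (Yb n × Ybar n) (Yb n × Ybar n) ℂ :=
  Matrix.of fun a b => if a = cnotFun n b then 1 else 0

/-- O^x = (1⊗F)·CNOT·(1⊗F) on ℂ^{Y×Ȳ}. -/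
def Oxsmall (n : ℕ) : Matrix (Yb n × Ybar n) (Yb n × Ybar n) ℂ :=
  ((1 : Matrix (Yb n) (Yb n) ℂ) ⊗ₖ Fmat n) * CNOTmat n *
    ((1 : Matrix (Yb n) (Yb n) ℂ) ⊗ₖ Fmat n)

/-- The database index set D̄ = X → Ȳ. -/
abbrev Db (n : ℕ) (X : Type*) := X → Ybar n

/-- An operator A on ℂ^Ȳ acting on the x-coordinate of ℂ^{D̄}. -/
def onCoord {n : ℕ} {X : Type*} [Fintype X] [DecidableEq X] (x : X)
    (A : Matrix (Ybar n) (Ybar n) ℂ) : Matrix (Db n X) (Db n X) ℂ :=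
  Matrix.of fun d d' => if ∀ x', x' ≠ x → d x' = d' x' then A (d x) (d' x) else 0

/-- Π^x_{D_x} : diagonal projection on ℂ^{D̄} onto databases with (x, d x) ∈ R. -/
def PiDx {n : ℕ} {X : Type*} [Fintype X] [DecidableEq X]
    (R : X → Yb n → Prop) [∀ x, DecidablePred (R x)] (x : X) :
    Matrix (Db n X) (Db n X) ℂ :=
  Matrix.diagonal fun d => if hitB R x (d x) then 1 else 0

/-- Π^∅_D : diagonal projection on ℂ^{D̄} onto databases hitting R nowhere. -/
def PiEmptyD {n : ℕ} {X : Type*} [Fintype X] [DecidableEq X]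
    (R : X → Yb n → Prop) [∀ x, DecidablePred (R x)] :
    Matrix (Db n X) (Db n X) ℂ :=
  Matrix.diagonal fun d => if ∀ x, hitB R x (d x) = false then 1 else 0

/-- CNOT_{YD_x}. -/
def cnotDFun {n : ℕ} {X : Type*} (x : X) : Yb n × Db n X → Yb n × Db n X :=
  fun p => Option.casesOn (p.2 x) p fun yx => (xorY p.1 yx, p.2)

def CNOTD {n : ℕ} {X : Type*} [Fintype X] [DecidableEq X] (x : X) :
    Matrix (Yb n × Db n X) (Yb n × Db n X) ℂ :=
  Matrix.of fun a b => if a = cnotDFun x b then 1 else 0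

/-- F_{D_x}. -/
def FDx (n : ℕ) {X : Type*} [Fintype X] [DecidableEq X] (x : X) :
    Matrix (Db n X) (Db n X) ℂ :=
  onCoord x (Fmat n)

/-- O^x_{YD_x} = F_{D_x}·CNOT_{YD_x}·F_{D_x} on ℂ^{Y×D̄}. -/
def OxD (n : ℕ) {X : Type*} [Fintype X] [DecidableEq X] (x : X) :
    Matrix (Yb n × Db n X) (Yb n × Db n X) ℂ :=
  ((1 : Matrix (Yb n) (Yb n) ℂ) ⊗ₖ FDx n x) * CNOTD x *
    ((1 : Matrix (Yb n) (Yb n) ℂ) ⊗ₖ FDx n x)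

/-- O_{XYD} = ∑_x |x⟩⟨x| ⊗ O^x_{YD_x} on ℂ^{X×Y×D̄}. -/
def OXYD (n : ℕ) (X : Type*) [Fintype X] [DecidableEq X] :
    Matrix (X × Yb n × Db n X) (X × Yb n × Db n X) ℂ :=
  Matrix.of fun p q =>
    if p.1 = q.1 then OxD n p.1 (p.2.1, p.2.2) (q.2.1, q.2.2) else 0

/-- The pointer set P = ZMod (|X|+1). -/
abbrev Ptr (X : Type*) [Fintype X] := ZMod (Fintype.card X + 1)

/-- Encoding of X into the nonzero elements of ZMod (|X|+1). -/
def encodeX {X : Type*} [Fintype X] (x : X) : Ptr X :=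
  (((Fintype.equivFin X x : ℕ) + 1 : ℕ) : Ptr X)

/-- ext(d): the smallest x ∈ X with (x, d x) ∈ R, encoded in ZMod (|X|+1); ∅ ↦ 0. -/
def extD {n : ℕ} {X : Type*} [Fintype X] [LinearOrder X] (R : X → Yb n → Prop)
    [∀ x, DecidablePred (R x)] (d : Db n X) : Ptr X :=
  if h : (Finset.univ.filter fun x => hitB R x (d x) = true).Nonempty then
    encodeX ((Finset.univ.filter fun x => hitB R x (d x) = true).min' h)
  else 0

/-- The purified measurement M_{DP} : |d⟩⊗|w⟩ ↦ |d⟩⊗|w + ext(d)⟩ on ℂ^{D̄×P}. -/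
def MDP {n : ℕ} {X : Type*} [Fintype X] [LinearOrder X] (R : X → Yb n → Prop)
    [∀ x, DecidablePred (R x)] :
    Matrix (Db n X × Ptr X) (Db n X × Ptr X) ℂ :=
  Matrix.of fun p q => if p = (q.1, q.2 + extD R q.1) then 1 else 0

/-- O^x_{YD_x} ⊗ 1_P on ℂ^{Y×D̄×P}. -/
def OxDP (n : ℕ) {X : Type*} [Fintype X] [DecidableEq X] (x : X) :
    Matrix (Yb n × Db n X × Ptr X) (Yb n × Db n X × Ptr X) ℂ :=
  Matrix.of fun p q =>
    if p.2.2 = q.2.2 then OxD n x (p.1, p.2.1) (q.1, q.2.1) else 0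

/-- 1_Y ⊗ M_{DP} on ℂ^{Y×D̄×P}. -/
def MYDP {n : ℕ} {X : Type*} [Fintype X] [LinearOrder X] (R : X → Yb n → Prop)
    [∀ x, DecidablePred (R x)] :
    Matrix (Yb n × Db n X × Ptr X) (Yb n × Db n X × Ptr X) ℂ :=
  Matrix.of fun p q =>
    if p.1 = q.1 then MDP R (p.2.1, p.2.2) (q.2.1, q.2.2) else 0

/-- O_{XYD} ⊗ 1_P on ℂ^{X×Y×D̄×P}. -/
def OXYDP (n : ℕ) (X : Type*) [Fintype X] [DecidableEq X] :
    Matrix (X × Yb n × Db n X × Ptr X) (X × Yb n × Db n X × Ptr X) ℂ :=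
  Matrix.of fun p q =>
    if p.2.2.2 = q.2.2.2 then
      OXYD n X (p.1, p.2.1, p.2.2.1) (q.1, q.2.1, q.2.2.1)
    else 0

/-- 1_{X×Y} ⊗ M_{DP} on ℂ^{X×Y×D̄×P}. -/
def MXYDP {n : ℕ} {X : Type*} [Fintype X] [LinearOrder X] (R : X → Yb n → Prop)
    [∀ x, DecidablePred (R x)] :
    Matrix (X × Yb n × Db n X × Ptr X) (X × Yb n × Db n X × Ptr X) ℂ :=
  Matrix.of fun p q =>
    if p.1 = q.1 ∧ p.2.1 = q.2.1 then
      MDP R (p.2.2.1, p.2.2.2) (q.2.2.1, q.2.2.2)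
    else 0

-- helper instance (Lean struggles to find this by search)
instance instDEq4 (n : ℕ) (X : Type*) [Fintype X] [DecidableEq X] :
    DecidableEq (X × Yb n × Db n X × Ptr X) :=
  instDecidableEqProd

-- extensions to the five-register space W × X × Y × D̄ × P
/-- 1_W ⊗ O_{XYD} ⊗ 1_P on ℂ^{W×X×Y×D̄×P}. -/
def OW (n : ℕ) (W X : Type*) [Fintype X] [DecidableEq X] [DecidableEq W] :
    Matrix (W × X × Yb n × Db n X × Ptr X) (W × X × Yb n × Db n X × Ptr X) ℂ :=
  Matrix.of fun p q =>
    if p.1 = q.1 ∧ p.2.2.2.2 = q.2.2.2.2 then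
      OXYD n X (p.2.1, p.2.2.1, p.2.2.2.1) (q.2.1, q.2.2.1, q.2.2.2.1)
    else 0

/-- 1_{W×X×Y} ⊗ M_{DP} on ℂ^{W×X×Y×D̄×P}. -/
def MW {n : ℕ} (W : Type*) {X : Type*} [Fintype X] [LinearOrder X] [DecidableEq W]
    (R : X → Yb n → Prop) [∀ x, DecidablePred (R x)] :
    Matrix (W × X × Yb n × Db n X × Ptr X) (W × X × Yb n × Db n X × Ptr X) ℂ :=
  Matrix.of fun p q =>
    if p.1 = q.1 ∧ p.2.1 = q.2.1 ∧ p.2.2.1 = q.2.2.1 then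
      MDP R (p.2.2.2.1, p.2.2.2.2) (q.2.2.2.1, q.2.2.2.2)
    else 0

instance instDEq5 (n : ℕ) (W X : Type*) [Fintype X] [DecidableEq X] [DecidableEq W] :
    DecidableEq (W × X × Yb n × Db n X × Ptr X) :=
  instDecidableEqProd

/-- V ⊗ 1_{D̄×P} on ℂ^{W×X×Y×D̄×P}. -/
def Vext (n : ℕ) (W X : Type*) [Fintype X] [DecidableEq X]
    (V : Matrix (W × X × Yb n) (W × X × Yb n) ℂ) :
    Matrix (W × X × Yb n × Db n X × Ptr X) (W × X × Yb n × Db n X × Ptr X) ℂ :=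
  Matrix.of fun p q =>
    if p.2.2.2 = q.2.2.2 then V (p.1, p.2.1, p.2.2.1) (q.1, q.2.1, q.2.2.1) else 0

/-- Ψ = ψ ⊗ |⊥⃗⟩ ⊗ |0⟩. -/
def PsiInit (n : ℕ) {W X : Type*} [Fintype X] [DecidableEq X]
    (ψ : W × X × Yb n → ℂ) : W × X × Yb n × Db n X × Ptr X → ℂ :=
  fun p =>
    if p.2.2.2.1 = (fun _ => (none : Ybar n)) ∧ p.2.2.2.2 = (0 : Ptr X) then
      ψ (p.1, p.2.1, p.2.2.1)
    else 0

/-- 1_{W×X×Y×D̄} ⊗ |0⟩⟨0|_P. -/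
def ProjZeroP (n : ℕ) (W X : Type*) [Fintype X] [DecidableEq X] [DecidableEq W] :
    Matrix (W × X × Yb n × Db n X × Ptr X) (W × X × Yb n × Db n X × Ptr X) ℂ :=
  Matrix.of fun p q =>
    if p.1 = q.1 ∧ p.2.1 = q.2.1 ∧ p.2.2.1 = q.2.2.1 ∧ p.2.2.2.1 = q.2.2.2.1 ∧
        p.2.2.2.2 = (0 : Ptr X) ∧ q.2.2.2.2 = (0 : Ptr X) then 1 else 0

/-- O_{XYD} acting on registers 1, 2 and 5 of ℂ^{X×Y×X'×Y'×D̄}. -/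
def Oquery1 (n : ℕ) (X : Type*) [Fintype X] [DecidableEq X] :
    Matrix (X × Yb n × X × Yb n × Db n X) (X × Yb n × X × Yb n × Db n X) ℂ :=
  Matrix.of fun p q =>
    if p.2.2.1 = q.2.2.1 ∧ p.2.2.2.1 = q.2.2.2.1 then
      OXYD n X (p.1, p.2.1, p.2.2.2.2) (q.1, q.2.1, q.2.2.2.2)
    else 0

/-- O_{X'Y'D} acting on registers 3, 4 and 5 of ℂ^{X×Y×X'×Y'×D̄}. -/
def Oquery2 (n : ℕ) (X : Type*) [Fintype X] [DecidableEq X] :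
    Matrix (X × Yb n × X × Yb n × Db n X) (X × Yb n × X × Yb n × Db n X) ℂ :=
  Matrix.of fun p q =>
    if p.1 = q.1 ∧ p.2.1 = q.2.1 then
      OXYD n X (p.2.2.1, p.2.2.2.1, p.2.2.2.2) (q.2.2.1, q.2.2.2.1, q.2.2.2.2)
    else 0

/-- M^R_{DP} acting on registers D and P of ℂ^{D̄×P×P'}. -/
def Mext1 {n : ℕ} {X : Type*} [Fintype X] [LinearOrder X]
    (R : X → Yb n → Prop) [∀ x, DecidablePred (R x)] :
    Matrix (Db n X × Ptr X × Ptr X) (Db n X × Ptr X × Ptr X) ℂ :=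
  Matrix.of fun p q =>
    if p.2.2 = q.2.2 then MDP R (p.1, p.2.1) (q.1, q.2.1) else 0

/-- M^{R'}_{DP'} acting on registers D and P' of ℂ^{D̄×P×P'}. -/
def Mext2 {n : ℕ} {X : Type*} [Fintype X] [LinearOrder X]
    (R' : X → Yb n → Prop) [∀ x, DecidablePred (R' x)] :
    Matrix (Db n X × Ptr X × Ptr X) (Db n X × Ptr X × Ptr X) ℂ :=
  Matrix.of fun p q =>
    if p.2.1 = q.2.1 then MDP R' (p.1, p.2.2) (q.1, q.2.2) else 0

/-! On a computational-basis vector `|y⟩`, `F` acts as `F|y⟩ = |y⟩ + 2^{-n/2} (|⊥⟩ - |φ₀⟩)`.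
Since `Π^x` kills `|⊥⟩` and `(1 - Π^x)|y⟩ = 0` for `y` in the relation, the operator
`(1 - Π^x) F Π^x` is the rank-one operator `|(1 - Π^x)(|⊥⟩ - |φ₀⟩)⟩⟨Π^x φ₀|`, whose norm is the
product of the two vector norms: at most `√2` (as `‖|⊥⟩ - |φ₀⟩‖ = √2`) times
`‖Π^x φ₀‖ = 2^{-n/2} √Γ_x`. The bound on `(1 - Π^x) F ψ` follows since `ψ = Π^x ψ`. -/

open Matrix

section OperatorNorm

variable {I : Type*} [Fintype I]

lemma vnorm_eq_norm_toLp (v : I → ℂ) : vnorm v = ‖WithLp.toLp 2 v‖ := by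
  rw [EuclideanSpace.norm_eq]; rfl

lemma vnorm_star (v : I → ℂ) : vnorm (star v) = vnorm v := by
  simp [vnorm]

variable [DecidableEq I]

lemma vnorm_mulVec_le (A : Matrix I I ℂ) (ψ : I → ℂ) :
    vnorm (A *ᵥ ψ) ≤ opNorm A * vnorm ψ := by
  simpa only [opNorm, vnorm_eq_norm_toLp, toEuclideanCLM_toLp] using
    (toEuclideanCLM (𝕜 := ℂ) A).le_opNorm (WithLp.toLp 2 ψ)

lemma toEuclideanCLM_vecMulVec (u v : I → ℂ) :
    toEuclideanCLM (𝕜 := ℂ) (vecMulVec u v) =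
      InnerProductSpace.rankOne ℂ (WithLp.toLp 2 u) (WithLp.toLp 2 (star v)) := by
  ext w i
  simp [vecMulVec_mulVec, PiLp.inner_apply, dotProduct, mul_comm]

lemma opNorm_vecMulVec (u v : I → ℂ) : opNorm (vecMulVec u v) = vnorm u * vnorm v := by
  rw [opNorm, toEuclideanCLM_vecMulVec, InnerProductSpace.norm_rankOne, vnorm_eq_norm_toLp,
    ← vnorm_star v, vnorm_eq_norm_toLp (star v)]

end OperatorNorm

section Walsh

variable {n : ℕ}

lemma signDot_eq_prod (η y : Yb n) : signDot η y = ∏ i, (-1) ^ (η i && y i).toNat := by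
  rw [signDot, Finset.card_filter, ← Finset.prod_pow_eq_pow_sum]
  exact Finset.prod_congr rfl fun i _ => by cases η i && y i <;> rfl

@[simp]
lemma signDot_zero_left (y : Yb n) : signDot (fun _ => false) y = 1 := by
  simp [signDot]

@[simp]
lemma signDot_zero_right (η : Yb n) : signDot η (fun _ => false) = 1 := by
  simp [signDot]

lemma signDot_mul_signDot (z w y : Yb n) :
    signDot z w * signDot w y = signDot (xorY z y) w := by
  simp only [signDot_eq_prod, ← Finset.prod_mul_distrib, xorY]
  refine Finset.prod_congr rfl fun i _ => ?_
  cases z i <;> cases w i <;> cases y i <;> norm_num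

lemma sum_signDot (η : Yb n) :
    ∑ y, signDot η y = if η = (fun _ => false) then (2 : ℂ) ^ n else 0 := by
  split_ifs with hη
  · simp [hη]
  · obtain ⟨i, hi⟩ : ∃ i, η i = true := by
      by_contra! h
      exact hη (funext fun i => by simpa using h i)
    calc ∑ y, signDot η y = ∏ i, ∑ b : Bool, (-1 : ℂ) ^ (η i && b).toNat := by
          simp only [signDot_eq_prod]
          exact (Fintype.prod_sum fun i (b : Bool) => (-1 : ℂ) ^ (η i && b).toNat).symm
      _ = 0 := Finset.prod_eq_zero (Finset.mem_univ i) (by simp [hi])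

lemma xorY_eq_zero_iff (z y : Yb n) : xorY z y = (fun _ => false) ↔ z = y := by
  simp [funext_iff, xorY]

end Walsh

section FourierSwap

variable {n : ℕ}

lemma cst_pos : 0 < cst n := Real.rpow_pos_of_pos two_pos _

lemma cst_sq : cst n ^ 2 = (2 ^ n)⁻¹ := by
  rw [cst, ← Real.rpow_natCast, ← Real.rpow_mul zero_le_two, Nat.cast_ofNat,
    div_mul_cancel₀ _ two_ne_zero, Real.rpow_neg zero_le_two, Real.rpow_natCast]

lemma cst_sq_mul_two_pow : (cst n : ℂ) ^ 2 * 2 ^ n = 1 := by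
  rw [← Complex.ofReal_pow, cst_sq]
  push_cast
  exact inv_mul_cancel₀ (pow_ne_zero _ two_ne_zero)

@[simp] lemma Hbar_none_none : Hbar n none none = 1 := rfl
@[simp] lemma Hbar_none_some (y : Yb n) : Hbar n none (some y) = 0 := rfl
@[simp] lemma Hbar_some_none (z : Yb n) : Hbar n (some z) none = 0 := rfl
@[simp] lemma Hbar_some_some (z y : Yb n) : Hbar n (some z) (some y) = cst n * signDot z y := rfl

lemma Hbar_swapBot_some (a : Ybar n) (w : Yb n) :
    Hbar n a (swapBot n (some w)) =
      if w = (fun _ => false) then Hbar n a none else Hbar n a (some w) := by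
  simp only [swapBot]
  split_ifs <;> rfl

lemma Fmat_apply (a b : Ybar n) : Fmat n a b = ∑ d, Hbar n a (swapBot n d) * Hbar n d b := by
  simp [Fmat, Sswap, Matrix.mul_apply]

lemma Fmat_none_some (y : Yb n) : Fmat n none (some y) = cst n := by
  simp [Fmat_apply, Fintype.sum_option, Hbar_swapBot_some]

lemma Fmat_some_some (z y : Yb n) :
    Fmat n (some z) (some y) = (if z = y then 1 else 0) - (cst n : ℂ) ^ 2 := by
  have hterm : ∀ w, Hbar n (some z) (swapBot n (some w)) * Hbar n (some w) (some y) =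
      (cst n : ℂ) ^ 2 * signDot (xorY z y) w -
        if w = (fun _ => false) then (cst n : ℂ) ^ 2 else 0 := by
    intro w
    rw [Hbar_swapBot_some]
    split_ifs with hw
    · simp [hw]
    · simp only [Hbar_some_some, ← signDot_mul_signDot]
      ring
  rw [Fmat_apply, Fintype.sum_option, Fintype.sum_congr _ _ hterm, Finset.sum_sub_distrib,
    ← Finset.mul_sum, sum_signDot, Finset.sum_ite_eq' Finset.univ]
  simp only [xorY_eq_zero_iff, Finset.mem_univ, if_true]
  split_ifs <;> simp [cst_sq_mul_two_pow]

lemma Fmat_apply_some (a : Ybar n) (y : Yb n) :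
    Fmat n a (some y) = ket (some y) a + cst n * (ket none a - phi0 n a) := by
  cases a with
  | none => simp [Fmat_none_some, ket, phi0, phi]
  | some z => simp [Fmat_some_some, ket, phi0, phi]; ring

end FourierSwap

section RankOne

variable {n : ℕ} {X : Type*} (R : X → Yb n → Prop) [∀ x, DecidablePred (R x)] (x : X)

lemma one_sub_Pix :
    1 - Pix R x = diagonal fun a => 1 - if hitB R x a then 1 else 0 := by
  rw [Pix, ← diagonal_one, diagonal_sub]

lemma one_sub_Pix_mul_Fmat_mul_Pix :
    (1 - Pix R x) * Fmat n * Pix R x =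
      vecMulVec ((1 - Pix R x) *ᵥ (ket none - phi0 n)) (Pix R x *ᵥ phi0 n) := by
  ext a b
  rw [one_sub_Pix, Pix, mul_diagonal, diagonal_mul, vecMulVec_apply, mulVec_diagonal,
    mulVec_diagonal]
  cases b with
  | none => simp [hitB]
  | some y =>
    rw [Fmat_apply_some]
    by_cases hy : R x y
    · by_cases ha : a = some y
      · simp [ha, hitB, hy]
      · simp [hitB, hy, ket, ha, phi0, phi]
        ring
    · simp [hitB, hy]

lemma vnorm_one_sub_Pix_mulVec_le :
    vnorm ((1 - Pix R x) *ᵥ (ket none - phi0 n)) ≤ Real.sqrt 2 := by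
  have hcontract : ∀ (w : Ybar n → ℂ) a, ‖((1 - Pix R x) *ᵥ w) a‖ ≤ ‖w a‖ := by
    intro w a
    rw [one_sub_Pix, mulVec_diagonal, norm_mul]
    split_ifs <;> simp
  have hnorm : ∑ a, ‖(ket none - phi0 n : Ybar n → ℂ) a‖ ^ 2 = 2 := by
    simp [Fintype.sum_option, ket, phi0, phi, cst_sq, one_add_one_eq_two]
  rw [vnorm, ← hnorm]
  exact Real.sqrt_le_sqrt <| Finset.sum_le_sum fun a _ =>
    pow_le_pow_left₀ (norm_nonneg _) (hcontract _ a) 2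

lemma vnorm_Pix_mulVec_phi0 [Fintype X] :
    vnorm (Pix R x *ᵥ phi0 n) = cst n * Real.sqrt (Gam R x) := by
  have hsum : ∑ a, ‖(Pix R x *ᵥ phi0 n) a‖ ^ 2 = cst n ^ 2 * Gam R x := by
    simp [Fintype.sum_option, Pix, mulVec_diagonal, hitB, phi0, phi, Gam, apply_ite, mul_pow,
      ← Finset.sum_filter, mul_comm]
  rw [vnorm, hsum, Real.sqrt_mul (sq_nonneg _), Real.sqrt_sq cst_pos.le]

lemma opNorm_one_sub_Pix_mul_Fmat_mul_Pix_le [Fintype X] :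
    opNorm ((1 - Pix R x) * Fmat n * Pix R x) ≤ cst n * Real.sqrt (2 * Gam R x) := by
  rw [one_sub_Pix_mul_Fmat_mul_Pix, opNorm_vecMulVec, vnorm_Pix_mulVec_phi0,
    Real.sqrt_mul zero_le_two, mul_left_comm _ (Real.sqrt 2)]
  exact mul_le_mul_of_nonneg_right (vnorm_one_sub_Pix_mulVec_le R x)
    (mul_nonneg cst_pos.le (Real.sqrt_nonneg _))

end RankOne

theorem stmt14_general (n : ℕ) {X : Type*} [Fintype X]
    (R : X → Yb n → Prop) [∀ x, DecidablePred (R x)] (x : X) :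
    opNorm (((1 : Matrix (Ybar n) (Ybar n) ℂ) - Pix R x) * Fmat n * Pix R x) ≤
        (2 : ℝ) ^ (-(n : ℝ) / 2) * Real.sqrt (2 * (Gam R x : ℝ)) ∧
      ∀ ψ : Ybar n → ℂ, (∑ a, ‖ψ a‖ ^ 2 = 1) → (Pix R x).mulVec ψ = ψ →
        vnorm ((((1 : Matrix (Ybar n) (Ybar n) ℂ) - Pix R x) * Fmat n).mulVec ψ) ^ 2 ≤
          2 * (Gam R x : ℝ) / 2 ^ n := by
  refine ⟨opNorm_one_sub_Pix_mul_Fmat_mul_Pix_le R x, fun ψ hψ hPψ => ?_⟩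
  have hψ1 : vnorm ψ = 1 := by rw [vnorm, hψ, Real.sqrt_one]
  have hbound : vnorm (((1 - Pix R x) * Fmat n) *ᵥ ψ) ≤ cst n * Real.sqrt (2 * Gam R x) :=
    calc vnorm (((1 - Pix R x) * Fmat n) *ᵥ ψ)
        = vnorm (((1 - Pix R x) * Fmat n * Pix R x) *ᵥ ψ) := by
          rw [← mulVec_mulVec ψ _ (Pix R x), hPψ]
      _ ≤ opNorm ((1 - Pix R x) * Fmat n * Pix R x) * vnorm ψ := vnorm_mulVec_le _ _
      _ ≤ cst n * Real.sqrt (2 * Gam R x) := by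
        rw [hψ1, mul_one]; exact opNorm_one_sub_Pix_mul_Fmat_mul_Pix_le R x
  calc vnorm (((1 - Pix R x) * Fmat n) *ᵥ ψ) ^ 2
      ≤ (cst n * Real.sqrt (2 * Gam R x)) ^ 2 := pow_le_pow_left₀ (Real.sqrt_nonneg _) hbound 2
    _ = 2 * Gam R x / 2 ^ n := by
      rw [mul_pow, cst_sq, Real.sq_sqrt (by positivity), inv_mul_eq_div]

theorem stmt14 (n : ℕ) {X : Type*} [Fintype X] [Nonempty X]
    (R : X → Yb n → Prop) [∀ x, DecidablePred (R x)] (x : X) :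
    opNorm (((1 : Matrix (Ybar n) (Ybar n) ℂ) - Pix R x) * Fmat n * Pix R x) ≤
        (2 : ℝ) ^ (-(n : ℝ) / 2) * Real.sqrt (2 * (Gam R x : ℝ)) ∧
      ∀ ψ : Ybar n → ℂ, (∑ a, ‖ψ a‖ ^ 2 = 1) → (Pix R x).mulVec ψ = ψ →
        vnorm ((((1 : Matrix (Ybar n) (Ybar n) ℂ) - Pix R x) * Fmat n).mulVec ψ) ^ 2 ≤
          2 * (Gam R x : ℝ) / 2 ^ n :=
  stmt14_general n R x

end
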